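/- arXiv:2310.05040 — 4 statements merged into one kernel-verified Lean document; each statement's English description precedes it below -/
import Mathlib

section
/- Let R > 0 and let u : [0,R] → ℝ be continuously differentiable on (0,R), continuous on [0,R], with u(0) = 0 and u(R) = 0, and such that r ↦ (u'(r) + u(r)/r)² r is integrable on (0,R). Then for every r ∈ [0,R], |u(r)|² ≤ ∫₀^R (u'(s) + u(s)/s)² s ds. In particular, for the radially symmetric vector field 𝐮(x) = u(|x|)x/|x| on the ball of radius R in ℝ², ‖u‖_{L^∞} ≤ ‖div 𝐮‖_{L²} ≤ ‖∇𝐮‖_{L²}. -/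
open MeasureTheory Set

/-- **Pointwise bound for radial fields.** Let `u : [0,R] → ℝ` be continuous on `[0,R]`,
continuously differentiable on `(0,R)`, with `u(0) = u(R) = 0`, and suppose
`r ↦ (u'(r) + u(r)/r)² r` is integrable on `(0,R)`. Then for every `r ∈ [0,R]`,
`|u(r)|² ≤ ∫₀ᴿ (u'(s) + u(s)/s)² s ds`; in particular, for the radial vector field
`𝐮(x) = u(|x|) x/|x|` on the 2D ball of radius `R` (for which `div 𝐮 = u' + u/s` and
`|∇𝐮|² = u'² + u²/s²`), one has `‖u‖_∞ ≤ ‖div 𝐮‖_{L²} ≤ ‖∇𝐮‖_{L²}`. -/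
theorem radial_max_le_div_L2 (R : ℝ) (hR : 0 < R) (u : ℝ → ℝ)
    (hu_cont : ContinuousOn u (Icc 0 R))
    (hu_diff : ∀ r ∈ Ioo (0:ℝ) R, DifferentiableAt ℝ u r)
    (hu_der_cont : ContinuousOn (deriv u) (Ioo 0 R))
    (h0 : u 0 = 0) (hRz : u R = 0)
    (hint : IntegrableOn (fun s => (deriv u s + u s / s) ^ 2 * s) (Ioo 0 R)) :
    (∀ r ∈ Icc (0:ℝ) R,
      (u r) ^ 2 ≤ ∫ s in Ioo (0:ℝ) R, (deriv u s + u s / s) ^ 2 * s) ∧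
    Real.sqrt (2 * Real.pi * ∫ s in Ioo (0:ℝ) R, (deriv u s + u s / s) ^ 2 * s)
      ≤ Real.sqrt (2 * Real.pi * ∫ s in Ioo (0:ℝ) R,
          ((deriv u s) ^ 2 + (u s / s) ^ 2) * s) := by
  set φ : ℝ → ℝ := fun s => (deriv u s + u s / s) ^ 2 * s with hφdef
  set G : ℝ → ℝ := fun s => ((deriv u s) ^ 2 + (u s / s) ^ 2) * s with hGdef
  set F : ℝ → ℝ := fun s => u s ^ 2 with hFdef
  set D : ℝ → ℝ := fun s => 2 * u s * deriv u s with hDdef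
  -- algebraic key identity
  have hkey : ∀ s ∈ Ioo (0:ℝ) R, φ s = D s + G s := by
    intro s hs
    have hs0 : s ≠ 0 := ne_of_gt hs.1
    simp only [hφdef, hGdef, hDdef]
    field_simp
    ring
  have hφ_nonneg : ∀ s ∈ Ioo (0:ℝ) R, 0 ≤ φ s := fun s hs =>
    mul_nonneg (sq_nonneg _) hs.1.le
  have hG_nonneg : ∀ s ∈ Ioo (0:ℝ) R, 0 ≤ G s := fun s hs =>
    mul_nonneg (add_nonneg (sq_nonneg _) (sq_nonneg _)) hs.1.le
  have hF_cont : ContinuousOn F (Icc 0 R) := hu_cont.pow 2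
  have hF_deriv : ∀ x ∈ Ioo (0:ℝ) R, HasDerivAt F (D x) x := by
    intro x hx
    have h := ((hu_diff x hx).hasDerivAt).fun_pow 2
    simpa [hDdef, pow_one, mul_comm, mul_assoc, mul_left_comm] using h
  have hu_cont' : ContinuousOn u (Ioo 0 R) := hu_cont.mono Ioo_subset_Icc_self
  have hG_cont : ContinuousOn G (Ioo 0 R) := by
    apply ContinuousOn.mul
    · exact (hu_der_cont.pow 2).add ((hu_cont'.div continuousOn_id
        (fun x hx => ne_of_gt hx.1)).pow 2)
    · exact continuousOn_id
  have hD_cont : ContinuousOn D (Ioo 0 R) :=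
    (continuousOn_const.mul hu_cont').mul hu_der_cont
  -- Part 1
  have part1 : ∀ r ∈ Icc (0:ℝ) R,
      (u r) ^ 2 ≤ ∫ s in Ioo (0:ℝ) R, φ s := by
    intro r hr
    have hsub : Ioo (0:ℝ) r ⊆ Ioo 0 R := Ioo_subset_Ioo le_rfl hr.2
    have φint : IntegrableOn φ (Icc 0 r) := by
      rw [integrableOn_Icc_iff_integrableOn_Ioo]
      exact hint.mono_set hsub
    have h1 : F r - F 0 ≤ ∫ y in (0:ℝ)..r, φ y := by
      apply intervalIntegral.sub_le_integral_of_hasDeriv_right_of_le hr.1 (hF_cont.mono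
        (Icc_subset_Icc le_rfl hr.2))
        (fun x hx => (hF_deriv x (hsub hx)).hasDerivWithinAt) φint
      intro x hx
      have hx' := hsub hx
      have hk := hkey x hx'
      have hg := hG_nonneg x hx'
      linarith
    have h2 : (∫ y in (0:ℝ)..r, φ y) ≤ ∫ s in Ioo (0:ℝ) R, φ s := by
      rw [intervalIntegral.integral_of_le hr.1, integral_Ioc_eq_integral_Ioo]
      apply setIntegral_mono_set hint
      · filter_upwards [ae_restrict_mem measurableSet_Ioo] with x hx using hφ_nonneg x hx
      · exact HasSubset.Subset.eventuallyLE hsub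
    have hF0 : F 0 = 0 := by simp [hFdef, h0]
    calc (u r) ^ 2 = F r - F 0 := by rw [hF0]; ring
      _ ≤ _ := h1.trans h2
  refine ⟨part1, ?_⟩
  -- bound on u^2
  obtain ⟨C, hC⟩ := isCompact_Icc.exists_bound_of_continuousOn hu_cont
  have hC2 : ∀ x ∈ Icc (0:ℝ) R, F x ≤ C ^ 2 := by
    intro x hx
    have h1 : |u x| ≤ C := by simpa [Real.norm_eq_abs] using hC x hx
    calc F x = |u x| ^ 2 := by rw [sq_abs]
      _ ≤ C ^ 2 := pow_le_pow_left₀ (abs_nonneg _) h1 2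
  have hF_nonneg : ∀ x : ℝ, 0 ≤ F x := fun x => sq_nonneg _
  -- integrability of G on Ioo 0 R
  set a : ℕ → ℝ := fun n => R / (n + 2) with hadef
  set b : ℕ → ℝ := fun n => R - R / (n + 2) with hbdef
  have han : ∀ n : ℕ, 0 < a n := fun n => by positivity
  have hab : ∀ n : ℕ, a n ≤ b n := by
    intro n
    have h1 : a n ≤ R / 2 := by
      apply div_le_div_of_nonneg_left hR.le (by norm_num)
      have : (0:ℝ) ≤ (n:ℝ) := Nat.cast_nonneg n
      linarith
    have h2 : R / 2 ≤ b n := by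
      simp only [hbdef]
      linarith
    exact h1.trans h2
  have hbn : ∀ n : ℕ, b n < R := by
    intro n
    have := han n
    simp only [hbdef, hadef] at *
    linarith
  have hIccsub : ∀ n : ℕ, Icc (a n) (b n) ⊆ Ioo 0 R := fun n =>
    Icc_subset_Ioo (han n) (hbn n)
  have hGa : ∀ n, IntegrableOn G (Ioc (a n) (b n)) := fun n =>
    ((hG_cont.mono (hIccsub n)).integrableOn_Icc).mono_set Ioc_subset_Icc_self
  set Iφ : ℝ := ∫ s in Ioo (0:ℝ) R, φ s with hIφdef
  have hbound : ∀ n : ℕ, (∫ x in Ioc (a n) (b n), ‖G x‖) ≤ Iφ + C ^ 2 := by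
    intro n
    have hsub : Ioc (a n) (b n) ⊆ Ioo 0 R := Ioc_subset_Icc_self.trans (hIccsub n)
    have hnorm : (∫ x in Ioc (a n) (b n), ‖G x‖) = ∫ x in Ioc (a n) (b n), G x := by
      apply setIntegral_congr_fun measurableSet_Ioc
      intro x hx
      exact Real.norm_of_nonneg (hG_nonneg x (hsub hx))
    have hφint' : IntegrableOn φ (Ioc (a n) (b n)) := hint.mono_set hsub
    have hDint' : IntegrableOn D (Ioc (a n) (b n)) :=
      ((hD_cont.mono (hIccsub n)).integrableOn_Icc).mono_set Ioc_subset_Icc_self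
    have hGsplit : (∫ x in Ioc (a n) (b n), G x)
        = (∫ x in Ioc (a n) (b n), φ x) - ∫ x in Ioc (a n) (b n), D x := by
      rw [← integral_sub hφint' hDint']
      apply setIntegral_congr_fun measurableSet_Ioc
      intro x hx
      show G x = (fun x => φ x - D x) x
      have := hkey x (hsub hx)
      simp only
      linarith
    have hFTC : (∫ x in Ioc (a n) (b n), D x) = F (b n) - F (a n) := by
      rw [← intervalIntegral.integral_of_le (hab n)]
      apply intervalIntegral.integral_eq_sub_of_hasDerivAt
      · intro x hx
        rw [uIcc_of_le (hab n)] at hx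
        exact hF_deriv x (hIccsub n hx)
      · apply ContinuousOn.intervalIntegrable
        rw [uIcc_of_le (hab n)]
        exact hD_cont.mono (hIccsub n)
    have hφle : (∫ x in Ioc (a n) (b n), φ x) ≤ Iφ := by
      rw [integral_Ioc_eq_integral_Ioo]
      apply setIntegral_mono_set hint
      · filter_upwards [ae_restrict_mem measurableSet_Ioo] with x hx using hφ_nonneg x hx
      · exact HasSubset.Subset.eventuallyLE (Ioo_subset_Ioc_self.trans hsub)
    have hFa : F (a n) ≤ C ^ 2 :=
      hC2 (a n) ⟨(han n).le, (hab n).trans (hbn n).le⟩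
    have hFb : 0 ≤ F (b n) := hF_nonneg _
    rw [hnorm, hGsplit, hFTC]
    linarith
  have ha_tend : Filter.Tendsto a Filter.atTop (nhds 0) := by
    have h1 : Filter.Tendsto (fun n : ℕ => ((n:ℝ) + 2)) Filter.atTop Filter.atTop :=
      Filter.tendsto_atTop_add_const_right _ 2 tendsto_natCast_atTop_atTop
    simpa [hadef] using Filter.Tendsto.div_atTop (tendsto_const_nhds (x := R)) h1
  have hb_tend : Filter.Tendsto b Filter.atTop (nhds R) := by
    have := Filter.Tendsto.sub (tendsto_const_nhds (x := R)
      (f := Filter.atTop (α := ℕ))) ha_tend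
    simpa [hbdef] using this
  have hGIoc : IntegrableOn G (Ioc 0 R) :=
    integrableOn_Ioc_of_intervalIntegral_norm_bounded hGa ha_tend hb_tend
      (Filter.Eventually.of_forall hbound)
  have hGIoo : IntegrableOn G (Ioo 0 R) := hGIoc.mono_set Ioo_subset_Ioc_self
  -- FTC on [0, R] for φ - G = D
  have hψint : IntegrableOn (fun s => φ s - G s) (Icc 0 R) := by
    rw [integrableOn_Icc_iff_integrableOn_Ioo]
    exact hint.sub hGIoo
  have h3 : (∫ y in (0:ℝ)..R, (φ y - G y)) ≤ F R - F 0 := by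
    apply intervalIntegral.integral_le_sub_of_hasDeriv_right_of_le hR.le hF_cont
      (fun x hx => (hF_deriv x hx).hasDerivWithinAt) hψint
    intro x hx
    show (fun s => φ s - G s) x ≤ D x
    have := hkey x hx
    simp only
    linarith
  have hFR : F R - F 0 = 0 := by simp [hFdef, h0, hRz]
  have h4 : (∫ y in (0:ℝ)..R, (φ y - G y))
      = Iφ - ∫ s in Ioo (0:ℝ) R, G s := by
    rw [intervalIntegral.integral_of_le hR.le, integral_Ioc_eq_integral_Ioo,
      integral_sub hint hGIoo]
  have hle : Iφ ≤ ∫ s in Ioo (0:ℝ) R, G s := by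
    rw [hFR, h4] at h3
    linarith
  apply Real.sqrt_le_sqrt
  have hπ : (0:ℝ) ≤ 2 * Real.pi := by positivity
  exact mul_le_mul_of_nonneg_left hle hπ
end

section
/- (Zlotnik's inequality) Let T > 0 and let y ∈ W^{1,1}(0,T) satisfy y'(t) = g(y(t)) + h'(t) for a.e. t ∈ [0,T] with y(0) = y₀, where g : ℝ → ℝ is continuous and h ∈ W^{1,1}(0,T). Assume g(s) → −∞ as s → +∞, and that h(t₂) − h(t₁) ≤ N₀ + N₁(t₂ − t₁) for all 0 ≤ t₁ < t₂ ≤ T, for some constants N₀ ≥ 0 and N₁ ≥ 0. Let ζ₀ be such that g(ζ) ≤ −N₁ for all ζ ≥ ζ₀. Then y(t) ≤ max(y₀, ζ₀) + N₀ < ∞ for all t ∈ [0,T]. -/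
open MeasureTheory Set Filter

/-- **Zlotnik's inequality.** Let `y ∈ W^{1,1}(0,T)` (an absolutely continuous function
with integrable derivative `y'`) satisfy `y' = g(y) + h'` a.e. on `[0,T]`, where `g` is
continuous with `g(s) → −∞` as `s → +∞` and `h ∈ W^{1,1}(0,T)` satisfies
`h(t₂) − h(t₁) ≤ N₀ + N₁(t₂ − t₁)` for all `0 ≤ t₁ < t₂ ≤ T` with `N₀, N₁ ≥ 0`. If
`g(ζ) ≤ −N₁` for all `ζ ≥ ζ₀`, then `y(t) ≤ max(y(0), ζ₀) + N₀` on `[0,T]`. -/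
theorem zlotnik_inequality
    (T N₀ N₁ ζ₀ : ℝ) (hT : 0 < T)
    (g : ℝ → ℝ) (hg_cont : Continuous g)
    (hg_infty : Tendsto g atTop atBot)
    (y h y' h' : ℝ → ℝ)
    (hy'_int : IntegrableOn y' (Ioc 0 T))
    (hh'_int : IntegrableOn h' (Ioc 0 T))
    (hy_ac : ∀ t ∈ Icc (0:ℝ) T, y t = y 0 + ∫ s in Ioc (0:ℝ) t, y' s)
    (hh_ac : ∀ t ∈ Icc (0:ℝ) T, h t = h 0 + ∫ s in Ioc (0:ℝ) t, h' s)
    (hode : ∀ᵐ t ∂(volume.restrict (Ioc (0:ℝ) T)), y' t = g (y t) + h' t)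
    (hN₀ : 0 ≤ N₀) (hN₁ : 0 ≤ N₁)
    (hh_lip : ∀ t₁ t₂ : ℝ, 0 ≤ t₁ → t₁ < t₂ → t₂ ≤ T →
      h t₂ - h t₁ ≤ N₀ + N₁ * (t₂ - t₁))
    (hζ₀ : ∀ ζ ≥ ζ₀, g ζ ≤ -N₁) :
    ∀ t ∈ Icc (0:ℝ) T, y t ≤ max (y 0) ζ₀ + N₀ := by
  set M := max (y 0) ζ₀ with hM
  have hy'_int' : IntegrableOn y' (Icc 0 T) :=
    (integrableOn_Icc_iff_integrableOn_Ioc).2 hy'_int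
  -- continuity of y on [0, T]
  have hy_cont : ContinuousOn y (Icc 0 T) := by
    have : ContinuousOn (fun t => y 0 + ∫ s in Ioc (0:ℝ) t, y' s) (Icc 0 T) :=
      continuousOn_const.add (intervalIntegral.continuousOn_primitive hy'_int')
    exact this.congr hy_ac
  -- integrability of g ∘ y on [0, T]
  have hgy_int : IntegrableOn (fun s => g (y s)) (Icc 0 T) :=
    (hg_cont.comp_continuousOn hy_cont).integrableOn_compact isCompact_Icc
  intro t ht
  by_contra hcon
  push_neg at hcon
  have hy0M : y 0 ≤ M := le_max_left _ _
  -- the set where y ≤ M on [0, t]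
  set S : Set ℝ := Icc 0 t ∩ y ⁻¹' Iic M with hS
  have hScl : IsClosed S :=
    (hy_cont.mono (Icc_subset_Icc le_rfl ht.2)).preimage_isClosed_of_isClosed
      isClosed_Icc isClosed_Iic
  have hSne : S.Nonempty := ⟨0, ⟨le_rfl, ht.1⟩, hy0M⟩
  have hScpt : IsCompact S :=
    isCompact_Icc.of_isClosed_subset hScl inter_subset_left
  set t₁ := sSup S with ht₁def
  have ht₁S : t₁ ∈ S := hScpt.sSup_mem hSne
  have ht₁0 : 0 ≤ t₁ := ht₁S.1.1
  have ht₁t : t₁ ≤ t := ht₁S.1.2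
  have hyt₁ : y t₁ ≤ M := ht₁S.2
  have ht₁lt : t₁ < t := by
    rcases lt_or_eq_of_le ht₁t with h' | h'
    · exact h'
    · exfalso
      have : y t ≤ M := h' ▸ hyt₁
      exact absurd hcon (not_lt.2 (this.trans (le_add_of_nonneg_right hN₀)))
  -- on (t₁, t], y > M ≥ ζ₀
  have hyM : ∀ s ∈ Ioc t₁ t, M < y s := by
    intro s hs
    by_contra hle
    push_neg at hle
    have hsS : s ∈ S := ⟨⟨ht₁0.trans hs.1.le, hs.2⟩, hle⟩
    exact absurd (le_csSup hScpt.bddAbove hsS) (not_le.2 hs.1)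
  have hsub : Ioc t₁ t ⊆ Ioc 0 T := Ioc_subset_Ioc ht₁0 ht.2
  have hsubIcc : Ioc t₁ t ⊆ Icc 0 T := hsub.trans Ioc_subset_Icc_self
  -- split integrals
  have hsplit : ∀ f : ℝ → ℝ, IntegrableOn f (Ioc 0 T) →
      (∫ s in Ioc (0:ℝ) t, f s) - (∫ s in Ioc (0:ℝ) t₁, f s) = ∫ s in Ioc t₁ t, f s := by
    intro f hf
    have h1 : IntegrableOn f (Ioc 0 t₁) := hf.mono_set (Ioc_subset_Ioc le_rfl (ht₁t.trans ht.2))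
    have h2 : IntegrableOn f (Ioc t₁ t) := hf.mono_set hsub
    have hd : Disjoint (Ioc (0:ℝ) t₁) (Ioc t₁ t) := by
      rw [Set.disjoint_left]
      intro x hx1 hx2
      exact absurd hx2.1 (not_lt.2 hx1.2)
    have := setIntegral_union hd measurableSet_Ioc h1 h2 (f := f) (μ := volume)
    rw [Ioc_union_Ioc_eq_Ioc ht₁0 ht₁t] at this
    rw [this]; ring
  have hy_eq : y t - y t₁ = ∫ s in Ioc t₁ t, y' s := by
    rw [hy_ac t ht, hy_ac t₁ ⟨ht₁0, ht₁t.trans ht.2⟩]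
    rw [← hsplit y' hy'_int]; ring
  have hh_eq : h t - h t₁ = ∫ s in Ioc t₁ t, h' s := by
    rw [hh_ac t ht, hh_ac t₁ ⟨ht₁0, ht₁t.trans ht.2⟩]
    rw [← hsplit h' hh'_int]; ring
  -- ODE on Ioc t₁ t
  have hode' : ∀ᵐ s ∂(volume.restrict (Ioc t₁ t)), y' s = g (y s) + h' s :=
    ae_restrict_of_ae_restrict_of_subset hsub hode
  have hgy_int' : IntegrableOn (fun s => g (y s)) (Ioc t₁ t) := hgy_int.mono_set hsubIcc
  have hh'_int' : IntegrableOn h' (Ioc t₁ t) := hh'_int.mono_set hsub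
  have hint_eq : ∫ s in Ioc t₁ t, y' s
      = (∫ s in Ioc t₁ t, g (y s)) + ∫ s in Ioc t₁ t, h' s := by
    rw [← integral_add hgy_int' hh'_int']
    exact integral_congr_ae hode'
  -- bound on the g-integral
  have hg_bound : (∫ s in Ioc t₁ t, g (y s)) ≤ -N₁ * (t - t₁) := by
    have : (∫ s in Ioc t₁ t, g (y s)) ≤ ∫ _ in Ioc t₁ t, (-N₁ : ℝ) := by
      apply setIntegral_mono_on hgy_int' (integrableOn_const measure_Ioc_lt_top.ne)
        measurableSet_Ioc
      intro s hs
      exact hζ₀ (y s) ((le_max_right _ _).trans (hyM s hs).le)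
    rw [setIntegral_const, Real.volume_real_Ioc_of_le (by linarith)] at this
    calc (∫ s in Ioc t₁ t, g (y s)) ≤ (t - t₁) • (-N₁ : ℝ) := this
      _ = -N₁ * (t - t₁) := by rw [smul_eq_mul]; ring
  -- bound on the h'-integral
  have hh_bound : (∫ s in Ioc t₁ t, h' s) ≤ N₀ + N₁ * (t - t₁) := by
    rw [← hh_eq]
    exact hh_lip t₁ t ht₁0 ht₁lt ht.2
  have : y t ≤ M + N₀ := by
    have := hy_eq
    rw [hint_eq] at this
    nlinarith [hg_bound, hh_bound, hyt₁]
  exact absurd hcon (not_lt.2 this)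
end

section
/- Let (ρ, u) be a radially symmetric strong solution on [0,R] × [0,T]. Define θ = 2μ ln ρ + (ρ^β − 1)/β, ξ(r,t) = ∫_R^r ρ(s,t) u(s,t) ds, and F = (2μ + ρ^β)(u_r + u/r) − ρ^γ. Then for all 0 < r < R and 0 < t < T the identity (θ + ξ)_t + u ∂_r(θ + ξ) + ∫_R^r ρ u² / s ds + ρ^γ + F(R,t) = 0 holds. -/
open MeasureTheory Set Filter

noncomputable section

/-- Radial divergence `u_r + u/r` of the 2D radial vector field `x ↦ u(|x|,t) x/|x|`. -/
def rdiv (u : ℝ → ℝ → ℝ) (r t : ℝ) : ℝ := deriv (fun s => u s t) r + u r t / r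

/-- Squared gradient `u_r² + u²/r²` of the 2D radial vector field. -/
def gradSq (u : ℝ → ℝ → ℝ) (r t : ℝ) : ℝ :=
  (deriv (fun s => u s t) r) ^ 2 + (u r t / r) ^ 2

/-- Material derivative `u̇ = u_t + u u_r` of the radial velocity. -/
def mder (u : ℝ → ℝ → ℝ) (r t : ℝ) : ℝ :=
  deriv (fun τ => u r τ) t + u r t * deriv (fun s => u s t) r

/-- Effective viscous flux `F = (2μ + ρ^β)(u_r + u/r) - ρ^γ`. -/
def flux (μ β γ : ℝ) (ρ u : ℝ → ℝ → ℝ) (r t : ℝ) : ℝ :=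
  (2 * μ + ρ r t ^ β) * rdiv u r t - ρ r t ^ γ

/-- A radially symmetric (smooth, strong) solution on `[0,R] × [0,T]` of the isentropic
compressible Navier–Stokes system with `μ > 0`, `λ(ρ) = ρ^β`, `P(ρ) = ρ^γ`, written in
radial coordinates: `ρ_t + (ρu)_r + ρu/r = 0` and
`(ρu)_t + (ρu²)_r + ρu²/r + (ρ^γ)_r = [(2μ + ρ^β)(u_r + u/r)]_r`, with Dirichlet
boundary conditions `u(0,t) = u(R,t) = 0`. -/
structure RadialSolution (μ β γ R T : ℝ) (ρ u : ℝ → ℝ → ℝ) : Prop where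
  hμ : 0 < μ
  hβ : 1 < β
  hγ : 1 < γ
  hR : 0 < R
  hT : 0 < T
  smooth_ρ : ∀ n : ℕ, ContDiff ℝ n (Function.uncurry ρ)
  smooth_u : ∀ n : ℕ, ContDiff ℝ n (Function.uncurry u)
  ρ_pos : ∀ r ∈ Icc 0 R, ∀ t ∈ Icc 0 T, 0 < ρ r t
  mass : ∀ r ∈ Ioo 0 R, ∀ t ∈ Icc 0 T,
    deriv (fun τ => ρ r τ) t + deriv (fun s => ρ s t * u s t) r + ρ r t * u r t / r = 0
  momentum : ∀ r ∈ Ioo 0 R, ∀ t ∈ Icc 0 T,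
    deriv (fun τ => ρ r τ * u r τ) t + deriv (fun s => ρ s t * u s t ^ 2) r
      + ρ r t * u r t ^ 2 / r + deriv (fun s => ρ s t ^ γ) r
      = deriv (fun s => (2 * μ + ρ s t ^ β) * rdiv u s t) r
  bc0 : ∀ t ∈ Icc 0 T, u 0 t = 0
  bcR : ∀ t ∈ Icc 0 T, u R t = 0

namespace CommAux

def Sm (g : ℝ → ℝ → ℝ) : Prop := ∀ n : ℕ, ContDiff ℝ n (Function.uncurry g)

variable {g h : ℝ → ℝ → ℝ}

lemma Sm.continuous (hg : Sm g) : Continuous (Function.uncurry g) := (hg 0).continuous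

lemma Sm.continuous_fst (hg : Sm g) (t : ℝ) : Continuous (fun s => g s t) :=
  hg.continuous.comp (continuous_id.prodMk continuous_const)

lemma Sm.diffAt_fst (hg : Sm g) (r t : ℝ) : DifferentiableAt ℝ (fun s => g s t) r :=
  DifferentiableAt.comp (g := Function.uncurry g) (f := fun s => (s, t)) r
    (((hg 1).differentiable (by simp)) (r, t))
    (differentiableAt_id.prodMk (differentiableAt_const t))

lemma Sm.diffAt_snd (hg : Sm g) (r t : ℝ) : DifferentiableAt ℝ (fun τ => g r τ) t :=
  (((hg 1).differentiable (by simp)) (r, t)).comp t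
    ((differentiableAt_const r).prodMk differentiableAt_id)

lemma Sm.hasDerivAt_fst (hg : Sm g) (r t : ℝ) :
    HasDerivAt (fun s => g s t) (deriv (fun s => g s t) r) r :=
  (hg.diffAt_fst r t).hasDerivAt

lemma Sm.hasDerivAt_snd (hg : Sm g) (r t : ℝ) :
    HasDerivAt (fun τ => g r τ) (deriv (fun τ => g r τ) t) t :=
  (hg.diffAt_snd r t).hasDerivAt

lemma Sm.deriv_fst_eq (hg : Sm g) (r t : ℝ) :
    deriv (fun s => g s t) r = fderiv ℝ (Function.uncurry g) (r, t) (1, 0) := by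
  have h1 : HasDerivAt (fun s : ℝ => ((s, t) : ℝ × ℝ)) ((1 : ℝ), (0 : ℝ)) r :=
    (hasDerivAt_id r).prodMk (hasDerivAt_const r t)
  have h2 : HasFDerivAt (Function.uncurry g) (fderiv ℝ (Function.uncurry g) (r, t)) (r, t) :=
    (((hg 1).differentiable (by simp)) (r, t)).hasFDerivAt
  exact (h2.comp_hasDerivAt r h1).deriv

lemma Sm.deriv_snd_eq (hg : Sm g) (r t : ℝ) :
    deriv (fun τ => g r τ) t = fderiv ℝ (Function.uncurry g) (r, t) (0, 1) := by
  have h1 : HasDerivAt (fun τ : ℝ => ((r, τ) : ℝ × ℝ)) ((0 : ℝ), (1 : ℝ)) t :=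
    (hasDerivAt_const t r).prodMk (hasDerivAt_id t)
  have h2 : HasFDerivAt (Function.uncurry g) (fderiv ℝ (Function.uncurry g) (r, t)) (r, t) :=
    (((hg 1).differentiable (by simp)) (r, t)).hasFDerivAt
  exact (h2.comp_hasDerivAt t h1).deriv

lemma Sm.fst (hg : Sm g) : Sm (fun s t => deriv (fun z => g z t) s) := by
  intro n
  have heq : Function.uncurry (fun s t => deriv (fun z => g z t) s)
      = fun p : ℝ × ℝ => fderiv ℝ (Function.uncurry g) p ((1 : ℝ), (0 : ℝ)) := by
    funext p
    exact hg.deriv_fst_eq p.1 p.2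
  rw [heq]
  exact (ContDiff.fderiv_right (hg (n + 1)) (by exact_mod_cast le_rfl)).clm_apply contDiff_const

lemma Sm.snd (hg : Sm g) : Sm (fun s t => deriv (fun τ => g s τ) t) := by
  intro n
  have heq : Function.uncurry (fun s t => deriv (fun τ => g s τ) t)
      = fun p : ℝ × ℝ => fderiv ℝ (Function.uncurry g) p ((0 : ℝ), (1 : ℝ)) := by
    funext p
    exact hg.deriv_snd_eq p.1 p.2
  rw [heq]
  exact (ContDiff.fderiv_right (hg (n + 1)) (by exact_mod_cast le_rfl)).clm_apply contDiff_const

lemma Sm.mul (hg : Sm g) (hh : Sm h) : Sm (fun s t => g s t * h s t) :=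
  fun n => (hg n).mul (hh n)

end CommAux

open CommAux

/-- **Key commutator identity.** With `θ = 2μ log ρ + (ρ^β − 1)/β`,
`ξ(r,t) = ∫_R^r ρu ds`, and `F` the effective viscous flux, one has
`(θ+ξ)_t + u ∂_r(θ+ξ) + ∫_R^r ρu²/s ds + ρ^γ + F(R,t) = 0` on `(0,R) × (0,T)`. -/
theorem commutator_identity
    (μ β γ R T : ℝ) (ρ u : ℝ → ℝ → ℝ)
    (hsol : RadialSolution μ β γ R T ρ u) :
    ∀ r ∈ Ioo (0:ℝ) R, ∀ t ∈ Ioo (0:ℝ) T,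
      deriv (fun τ => 2 * μ * Real.log (ρ r τ) + (ρ r τ ^ β - 1) / β
          + ∫ s in R..r, ρ s τ * u s τ) t
        + u r t * deriv (fun r' => 2 * μ * Real.log (ρ r' t) + (ρ r' t ^ β - 1) / β
            + ∫ s in R..r', ρ s t * u s t) r
        + (∫ s in R..r, ρ s t * u s t ^ 2 / s)
        + ρ r t ^ γ + flux μ β γ ρ u R t = 0 := by
  intro r hr t ht
  obtain ⟨hr0, hrR⟩ := hr
  obtain ⟨ht0, htT⟩ := ht
  have htI : t ∈ Icc (0:ℝ) T := ⟨le_of_lt ht0, le_of_lt htT⟩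
  have hrI : r ∈ Ioo (0:ℝ) R := ⟨hr0, hrR⟩
  have Sρ : Sm ρ := hsol.smooth_ρ
  have Su : Sm u := hsol.smooth_u
  have Sm2 : Sm (fun s t => ρ s t * u s t) := Sρ.mul Su
  have Smu2 : Sm (fun s t => ρ s t * u s t ^ 2) := by
    have h : (fun s t => ρ s t * u s t ^ 2) = fun s t => (ρ s t * u s t) * u s t := by
      funext s t; ring
    rw [h]; exact Sm2.mul Su
  -- Step 1 : t-derivative of ξ by differentiation under the integral sign
  have hξt : HasDerivAt (fun τ => ∫ s in R..r, ρ s τ * u s τ)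
      (∫ s in R..r, deriv (fun τ => ρ s τ * u s τ) t) t := by
    obtain ⟨C, hC⟩ := (isCompact_uIcc (a := R) (b := r)).prod
      (isCompact_closedBall t 1) |>.exists_bound_of_continuousOn
      ((Sm2.snd).continuous.continuousOn)
    refine (intervalIntegral.hasDerivAt_integral_of_dominated_loc_of_deriv_le
      (F := fun τ s => ρ s τ * u s τ)
      (F' := fun τ s => deriv (fun τ' => ρ s τ' * u s τ') τ)
      (x₀ := t) (a := R) (b := r) (bound := fun _ => C) (Metric.ball_mem_nhds t one_pos)
      (Eventually.of_forall fun x => (Sm2.continuous_fst x).aestronglyMeasurable)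
      ((Sm2.continuous_fst t).intervalIntegrable R r)
      ((Sm2.snd).continuous_fst t).aestronglyMeasurable
      (Eventually.of_forall fun s hs x hx => hC (s, x)
        ⟨uIoc_subset_uIcc hs, Metric.ball_subset_closedBall hx⟩)
      (intervalIntegrable_const)
      (Eventually.of_forall fun s _ x _ => Sm2.hasDerivAt_snd s x)).2
  -- Step 2 : evaluate that integral using the momentum equation and FTC
  set Φ : ℝ → ℝ := fun s => (2 * μ + ρ s t ^ β) * rdiv u s t - ρ s t ^ γ - ρ s t * u s t ^ 2
    with hΦdef
  set Φ' : ℝ → ℝ := fun s => deriv (fun τ => ρ s τ * u s τ) t + ρ s t * u s t ^ 2 / s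
    with hΦ'def
  have hβ0 : (0:ℝ) ≤ β := le_of_lt (lt_trans zero_lt_one hsol.hβ)
  have hγ0 : (0:ℝ) ≤ γ := le_of_lt (lt_trans zero_lt_one hsol.hγ)
  have hsne : ∀ x ∈ Icc r R, x ≠ (0:ℝ) := fun x hx => ne_of_gt (lt_of_lt_of_le hr0 hx.1)
  have hΦcont : ContinuousOn Φ (Icc r R) := by
    apply ContinuousOn.sub
    apply ContinuousOn.sub
    · apply ContinuousOn.mul
      · exact (continuous_const.add ((Sρ.continuous_fst t).rpow_const
          (fun x => Or.inr hβ0))).continuousOn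
      · simp only [rdiv]
        exact (((Su.fst).continuous_fst t).continuousOn).add
          (((Su.continuous_fst t).continuousOn).div continuousOn_id hsne)
    · exact ((Sρ.continuous_fst t).rpow_const (fun x => Or.inr hγ0)).continuousOn
    · exact (Smu2.continuous_fst t).continuousOn
  have hQcont : ContinuousOn (fun s => ρ s t * u s t ^ 2 / s) (Icc r R) :=
    ((Smu2.continuous_fst t).continuousOn).div continuousOn_id hsne
  have hΦ'cont : ContinuousOn Φ' (Icc r R) :=
    (((Sm2.snd).continuous_fst t).continuousOn).add hQcont
  have hΦ'int : IntervalIntegrable Φ' volume r R :=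
    hΦ'cont.intervalIntegrable_of_Icc (le_of_lt hrR)
  have hQint : IntervalIntegrable (fun s => ρ s t * u s t ^ 2 / s) volume r R :=
    hQcont.intervalIntegrable_of_Icc (le_of_lt hrR)
  have hΦderiv : ∀ x ∈ Ioo r R, HasDerivWithinAt Φ (Φ' x) (Ioi x) x := by
    intro x hx
    have hx0 : (0:ℝ) < x := lt_trans hr0 hx.1
    have hA : DifferentiableAt ℝ (fun s => (2 * μ + ρ s t ^ β) * rdiv u s t) x := by
      have h2 : DifferentiableAt ℝ (fun s => rdiv u s t) x := by
        simp only [rdiv]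
        exact ((Su.fst).diffAt_fst x t).add
          ((Su.diffAt_fst x t).div differentiableAt_id (ne_of_gt hx0))
      exact ((differentiableAt_const _).add
        ((Sρ.diffAt_fst x t).rpow_const (Or.inr (le_of_lt hsol.hβ)))).mul h2
    have hB : DifferentiableAt ℝ (fun s => ρ s t ^ γ) x :=
      (Sρ.diffAt_fst x t).rpow_const (Or.inr (le_of_lt hsol.hγ))
    have hC2 : DifferentiableAt ℝ (fun s => ρ s t * u s t ^ 2) x := Smu2.diffAt_fst x t
    have hΦd : HasDerivAt Φ (deriv (fun s => (2 * μ + ρ s t ^ β) * rdiv u s t) x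
        - deriv (fun s => ρ s t ^ γ) x - deriv (fun s => ρ s t * u s t ^ 2) x) x :=
      (hA.hasDerivAt.sub hB.hasDerivAt).sub hC2.hasDerivAt
    have hmom := hsol.momentum x ⟨hx0, hx.2⟩ t htI
    have hval : deriv (fun s => (2 * μ + ρ s t ^ β) * rdiv u s t) x
        - deriv (fun s => ρ s t ^ γ) x - deriv (fun s => ρ s t * u s t ^ 2) x = Φ' x := by
      simp only [hΦ'def]; linarith
    rw [hval] at hΦd
    exact hΦd.hasDerivWithinAt
  have hFTC : ∫ y in r..R, Φ' y = Φ R - Φ r :=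
    intervalIntegral.integral_eq_sub_of_hasDeriv_right_of_le (le_of_lt hrR) hΦcont hΦderiv hΦ'int
  have hsplit : ∫ y in r..R, deriv (fun τ => ρ y τ * u y τ) t
      = (∫ y in r..R, Φ' y) - ∫ y in r..R, ρ y t * u y t ^ 2 / y := by
    rw [← intervalIntegral.integral_sub hΦ'int hQint]
    apply intervalIntegral.integral_congr
    intro y _
    simp only [hΦ'def]
    ring
  have hξt_val : (∫ s in R..r, deriv (fun τ => ρ s τ * u s τ) t)
      = Φ r - Φ R - ∫ s in R..r, ρ s t * u s t ^ 2 / s := by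
    rw [intervalIntegral.integral_symm r R, hsplit, hFTC,
      intervalIntegral.integral_symm r R (f := fun s => ρ s t * u s t ^ 2 / s)]
    ring
  -- Step 3 : t-derivative of θ
  have hPpos : 0 < ρ r t := hsol.ρ_pos r ⟨le_of_lt hr0, le_of_lt hrR⟩ t htI
  have hPne : ρ r t ≠ 0 := ne_of_gt hPpos
  have hθt : HasDerivAt (fun τ => 2 * μ * Real.log (ρ r τ) + (ρ r τ ^ β - 1) / β)
      (2 * μ * (deriv (fun τ => ρ r τ) t / ρ r t)
        + deriv (fun τ => ρ r τ) t * β * ρ r t ^ (β - 1) / β) t := by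
    have hPt := Sρ.hasDerivAt_snd r t
    exact ((hPt.log hPne).const_mul (2 * μ)).add
      (((hPt.rpow_const (Or.inl hPne)).sub_const 1).div_const β)
  -- Step 4 : r-derivative of θ + ξ
  have hθr : HasDerivAt (fun r' => 2 * μ * Real.log (ρ r' t) + (ρ r' t ^ β - 1) / β)
      (2 * μ * (deriv (fun s => ρ s t) r / ρ r t)
        + deriv (fun s => ρ s t) r * β * ρ r t ^ (β - 1) / β) r := by
    have hPr := Sρ.hasDerivAt_fst r t
    exact ((hPr.log hPne).const_mul (2 * μ)).add
      (((hPr.rpow_const (Or.inl hPne)).sub_const 1).div_const β)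
  have hξr : HasDerivAt (fun r' => ∫ s in R..r', ρ s t * u s t) (ρ r t * u r t) r :=
    intervalIntegral.integral_hasDerivAt_right ((Sm2.continuous_fst t).intervalIntegrable R r)
      ((Sm2.continuous_fst t).stronglyMeasurableAtFilter volume (nhds r))
      (Sm2.continuous_fst t).continuousAt
  -- rewrite the two derivatives in the goal
  have hDt : deriv (fun τ => 2 * μ * Real.log (ρ r τ) + (ρ r τ ^ β - 1) / β
      + ∫ s in R..r, ρ s τ * u s τ) t
      = (2 * μ * (deriv (fun τ => ρ r τ) t / ρ r t)
        + deriv (fun τ => ρ r τ) t * β * ρ r t ^ (β - 1) / β)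
        + ∫ s in R..r, deriv (fun τ => ρ s τ * u s τ) t := (hθt.add hξt).deriv
  have hDr : deriv (fun r' => 2 * μ * Real.log (ρ r' t) + (ρ r' t ^ β - 1) / β
      + ∫ s in R..r', ρ s t * u s t) r
      = (2 * μ * (deriv (fun s => ρ s t) r / ρ r t)
        + deriv (fun s => ρ s t) r * β * ρ r t ^ (β - 1) / β)
        + ρ r t * u r t := (hθr.add hξr).deriv
  rw [hDt, hDr, hξt_val]
  -- Step 5 : algebra using the mass equation
  have hmass := hsol.mass r hrI t htI
  have hderiv_m : deriv (fun s => ρ s t * u s t) r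
      = deriv (fun s => ρ s t) r * u r t + ρ r t * deriv (fun s => u s t) r :=
    ((Sρ.hasDerivAt_fst r t).mul (Su.hasDerivAt_fst r t)).deriv
  rw [hderiv_m] at hmass
  have hbcR : u R t = 0 := hsol.bcR t htI
  have hβne : β ≠ 0 := ne_of_gt (lt_trans zero_lt_one hsol.hβ)
  have hrne : r ≠ 0 := ne_of_gt hr0
  have hPt_eq : deriv (fun τ => ρ r τ) t
      = -(deriv (fun s => ρ s t) r * u r t) - ρ r t * deriv (fun s => u s t) r
        - ρ r t * u r t / r := by linarith
  simp only [hΦdef, flux, rdiv, hbcR, Real.rpow_sub_one hPne]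
  rw [hPt_eq]
  field_simp
  ring
end
end

section
/- Let (ρ, u) be a radially symmetric strong solution on [0,R] × [0,T] with ‖ρ‖_{L^∞(Ω×(0,T))} ≤ C₀, and let F = (2μ + ρ^β)(u_r + u/r) − ρ^γ, so that the momentum equation reads ρ u̇ = ∂_r F with u̇ = u_t + u u_r. Then for every 1 ≤ q < ∞ there is a constant C depending only on q, C₀ and Ω such that ‖∇F‖_{L^q(Ω)} ≤ C ‖∇u̇‖_{L²(Ω)} at each time t ∈ [0,T]. -/
open MeasureTheory Set Filter

noncomputable section

variable {u : ℝ → ℝ → ℝ}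

lemma sectL_contDiff {n : ℕ} (hu : ContDiff ℝ n (Function.uncurry u)) (t : ℝ) :
    ContDiff ℝ n (fun s => u s t) :=
  hu.comp (contDiff_id.prodMk contDiff_const)

lemma sectR_contDiff {n : ℕ} (hu : ContDiff ℝ n (Function.uncurry u)) (r : ℝ) :
    ContDiff ℝ n (fun τ => u r τ) :=
  hu.comp (contDiff_const.prodMk contDiff_id)

lemma hasDerivAt_sectL (hu : ContDiff ℝ 1 (Function.uncurry u)) (r t : ℝ) :
    HasDerivAt (fun s => u s t) (fderiv ℝ (Function.uncurry u) (r, t) (1, 0)) r := by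
  have h : HasFDerivAt (Function.uncurry u) (fderiv ℝ (Function.uncurry u) (r, t)) (r, t) :=
    (hu.differentiable (by norm_num) (r, t)).hasFDerivAt
  have hline : HasDerivAt (fun s : ℝ => (s, t)) ((1:ℝ), (0:ℝ)) r :=
    (hasDerivAt_id r).prodMk (hasDerivAt_const r t)
  exact h.comp_hasDerivAt r hline

lemma hasDerivAt_sectR (hu : ContDiff ℝ 1 (Function.uncurry u)) (r t : ℝ) :
    HasDerivAt (fun τ => u r τ) (fderiv ℝ (Function.uncurry u) (r, t) (0, 1)) t := by
  have h : HasFDerivAt (Function.uncurry u) (fderiv ℝ (Function.uncurry u) (r, t)) (r, t) :=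
    (hu.differentiable (by norm_num) (r, t)).hasFDerivAt
  have hline : HasDerivAt (fun τ : ℝ => (r, τ)) ((0:ℝ), (1:ℝ)) t :=
    (hasDerivAt_const t r).prodMk (hasDerivAt_id t)
  exact h.comp_hasDerivAt t hline

lemma mder_contDiff (hu : ContDiff ℝ 3 (Function.uncurry u)) (t : ℝ) :
    ContDiff ℝ 2 (fun s => mder u s t) := by
  have hG : ContDiff ℝ 2 (fderiv ℝ (Function.uncurry u)) :=
    hu.fderiv_right (by norm_num)
  have hline : ContDiff ℝ 2 (fun s : ℝ => (s, t)) := contDiff_id.prodMk contDiff_const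
  have h1 : ContDiff ℝ 2 (fun s : ℝ =>
      fderiv ℝ (Function.uncurry u) (s, t) ((0:ℝ), (1:ℝ))) :=
    (hG.comp hline).clm_apply contDiff_const
  have h2 : ContDiff ℝ 2 (fun s : ℝ =>
      fderiv ℝ (Function.uncurry u) (s, t) ((1:ℝ), (0:ℝ))) :=
    (hG.comp hline).clm_apply contDiff_const
  have hu1 : ContDiff ℝ 1 (Function.uncurry u) := hu.of_le (by norm_num)
  have heq : (fun s => mder u s t) = fun s =>
      fderiv ℝ (Function.uncurry u) (s, t) ((0:ℝ), (1:ℝ))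
        + u s t * fderiv ℝ (Function.uncurry u) (s, t) ((1:ℝ), (0:ℝ)) := by
    funext s
    rw [mder, (hasDerivAt_sectR hu1 s t).deriv, (hasDerivAt_sectL hu1 s t).deriv]
  rw [heq]
  exact h1.add (((sectL_contDiff hu t).of_le (by norm_num)).mul h2)

lemma flux_deriv_eq {μ β γ R T : ℝ} {ρ u : ℝ → ℝ → ℝ}
    (sol : RadialSolution μ β γ R T ρ u) {r t : ℝ} (hr : r ∈ Ioo 0 R) (ht : t ∈ Icc 0 T) :
    deriv (fun s => flux μ β γ ρ u s t) r = ρ r t * mder u r t := by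
  have hρC : ContDiff ℝ 2 (Function.uncurry ρ) := sol.smooth_ρ 2
  have huC : ContDiff ℝ 2 (Function.uncurry u) := sol.smooth_u 2
  have hsρ : Differentiable ℝ (fun s => ρ s t) :=
    (sectL_contDiff hρC t).differentiable (by norm_num)
  have hsu : Differentiable ℝ (fun s => u s t) :=
    (sectL_contDiff huC t).differentiable (by norm_num)
  have hsu' : Differentiable ℝ (fun s => deriv (fun x => u x t) s) := by
    have h2 : ContDiff ℝ (1+1) (fun s => u s t) := sectL_contDiff huC t
    exact (contDiff_succ_iff_deriv.mp h2).2.2.differentiable (by norm_num)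
  have htρ : DifferentiableAt ℝ (fun τ => ρ r τ) t :=
    (sectR_contDiff hρC r).differentiable (by norm_num) t
  have htu : DifferentiableAt ℝ (fun τ => u r τ) t :=
    (sectR_contDiff huC r).differentiable (by norm_num) t
  have hr0 : r ≠ 0 := ne_of_gt hr.1
  have hrdiv : DifferentiableAt ℝ (fun s => rdiv u s t) r := by
    have : DifferentiableAt ℝ (fun s => deriv (fun x => u x t) s + u s t / s) r :=
      (hsu' r).add ((hsu r).div differentiableAt_id hr0)
    exact this
  have hγd : DifferentiableAt ℝ (fun s => ρ s t ^ γ) r :=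
    (hsρ r).rpow_const (Or.inr sol.hγ.le)
  have hβd : DifferentiableAt ℝ (fun s => (2 * μ + ρ s t ^ β) * rdiv u s t) r :=
    ((differentiableAt_const _).add ((hsρ r).rpow_const (Or.inr sol.hβ.le))).mul hrdiv
  have hflux : deriv (fun s => flux μ β γ ρ u s t) r
      = deriv (fun s => (2 * μ + ρ s t ^ β) * rdiv u s t) r
        - deriv (fun s => ρ s t ^ γ) r := by
    simp only [flux]
    exact deriv_sub hβd hγd
  have hmom := sol.momentum r hr t ht
  have hmass := sol.mass r hr t ht
  have hDt : deriv (fun τ => ρ r τ * u r τ) t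
      = deriv (fun τ => ρ r τ) t * u r t + ρ r t * deriv (fun τ => u r τ) t :=
    deriv_mul htρ htu
  have hu2 : deriv (fun s => u s t ^ 2) r
      = (2:ℕ) * u r t ^ 1 * deriv (fun s => u s t) r :=
    (((hsu r).hasDerivAt).pow 2).deriv
  have hρu2 : deriv (fun s => ρ s t * u s t ^ 2) r
      = deriv (fun s => ρ s t) r * u r t ^ 2 + ρ r t * deriv (fun s => u s t ^ 2) r :=
    deriv_mul (hsρ r) ((hsu r).pow 2)
  have hρu : deriv (fun s => ρ s t * u s t) r
      = deriv (fun s => ρ s t) r * u r t + ρ r t * deriv (fun s => u s t) r :=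
    deriv_mul (hsρ r) (hsu r)
  rw [hρu] at hmass
  rw [hflux, ← hmom, hDt, hρu2, hu2, mder]
  linear_combination (u r t) * hmass

lemma mder_eq_zero_of_bc {T : ℝ} (hT : 0 < T) (hu : ContDiff ℝ 1 (Function.uncurry u))
    (r₀ : ℝ) (h0 : ∀ τ ∈ Icc 0 T, u r₀ τ = 0) {t : ℝ} (ht : t ∈ Icc 0 T) :
    mder u r₀ t = 0 := by
  have hd : HasDerivWithinAt (fun τ => u r₀ τ) (deriv (fun τ => u r₀ τ) t) (Icc 0 T) t :=
    ((((sectR_contDiff hu r₀).differentiable (by norm_num)) t).hasDerivAt).hasDerivWithinAt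
  have hd0 : HasDerivWithinAt (fun τ => u r₀ τ) 0 (Icc 0 T) t :=
    (hasDerivWithinAt_const t _ (0:ℝ)).congr (fun τ hτ => h0 τ hτ) (h0 t ht)
  have hder0 : deriv (fun τ => u r₀ τ) t = 0 :=
    ((uniqueDiffOn_Icc hT) t ht).eq_deriv _ hd hd0
  rw [mder, hder0, h0 t ht]
  ring

lemma pointwise_sqrt_log_bound {R : ℝ} (hR : 0 < R) {W : ℝ → ℝ}
    (hWc : ContDiff ℝ 2 W) (hWR : W R = 0) {r : ℝ} (hr : r ∈ Ioo 0 R) :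
    |W r| ≤ (∫ x in Ioo (0:ℝ) R, (deriv W x) ^ 2 * x) ^ (1/2:ℝ)
      * (Real.log (R/r)) ^ (1/2:ℝ) := by
  set A := ∫ x in Ioo (0:ℝ) R, (deriv W x) ^ 2 * x with hA
  have hWd : Differentiable ℝ W := hWc.differentiable (by norm_num)
  have hW'c : Continuous (deriv W) := hWc.continuous_deriv (by norm_num)
  obtain ⟨L, hL⟩ := isCompact_Icc.exists_bound_of_continuousOn
    (s := Icc (0:ℝ) R) hW'c.continuousOn
  have hLnn : 0 ≤ L := le_trans (norm_nonneg (deriv W 0)) (hL 0 ⟨le_refl 0, hR.le⟩)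
  have hrR : r ≤ R := hr.2.le
  have hr0 : 0 < r := hr.1
  have hWr : W r = -(∫ x in r..R, deriv W x) := by
    rw [intervalIntegral.integral_deriv_eq_sub (fun x _ => hWd x)
      (hW'c.intervalIntegrable r R), hWR]
    ring
  have h1 : |W r| ≤ ∫ x in Ioc r R, |deriv W x| := by
    rw [hWr, abs_neg, intervalIntegral.integral_of_le hrR]
    simpa [Real.norm_eq_abs] using
      norm_integral_le_integral_norm (μ := volume.restrict (Ioc r R)) (deriv W)
  haveI hfin : IsFiniteMeasure (volume.restrict (Ioc r R)) :=
    ⟨by rw [Measure.restrict_apply_univ]; exact measure_Ioc_lt_top⟩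
  have hae : ∀ᵐ x ∂(volume.restrict (Ioc r R)), x ∈ Ioc r R :=
    ae_restrict_mem measurableSet_Ioc
  set f : ℝ → ℝ := fun x => |deriv W x| * Real.sqrt x with hf
  set g : ℝ → ℝ := fun x => (Real.sqrt x)⁻¹ with hg
  have hfm : AEStronglyMeasurable f (volume.restrict (Ioc r R)) :=
    (hW'c.abs.mul Real.continuous_sqrt).aestronglyMeasurable
  have hgm : AEStronglyMeasurable g (volume.restrict (Ioc r R)) :=
    (Real.continuous_sqrt.measurable.inv).aestronglyMeasurable
  have hf2 : MemLp f (ENNReal.ofReal 2) (volume.restrict (Ioc r R)) := by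
    refine MemLp.of_bound hfm (L * Real.sqrt R) ?_
    filter_upwards [hae] with x hx
    have hx0 : (0:ℝ) ≤ x := le_of_lt (lt_trans hr0 hx.1)
    have hb1 : |deriv W x| ≤ L := by
      have := hL x ⟨hx0, hx.2⟩
      rwa [Real.norm_eq_abs] at this
    rw [Real.norm_eq_abs, abs_of_nonneg (mul_nonneg (abs_nonneg _) (Real.sqrt_nonneg x))]
    exact mul_le_mul hb1 (Real.sqrt_le_sqrt hx.2) (Real.sqrt_nonneg x) hLnn
  have hg2 : MemLp g (ENNReal.ofReal 2) (volume.restrict (Ioc r R)) := by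
    refine MemLp.of_bound hgm ((Real.sqrt r)⁻¹) ?_
    filter_upwards [hae] with x hx
    have h2 : 0 < Real.sqrt r := Real.sqrt_pos.mpr hr0
    rw [Real.norm_eq_abs, abs_of_nonneg (inv_nonneg.mpr (Real.sqrt_nonneg x))]
    exact inv_anti₀ h2 (Real.sqrt_le_sqrt hx.1.le)
  have hpq : Real.HolderConjugate 2 2 := (Real.holderConjugate_iff_eq_conjExponent one_lt_two).mpr (by norm_num)
  have hfnn : 0 ≤ᵐ[volume.restrict (Ioc r R)] f :=
    Eventually.of_forall fun x => mul_nonneg (abs_nonneg _) (Real.sqrt_nonneg x)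
  have hgnn : 0 ≤ᵐ[volume.restrict (Ioc r R)] g :=
    Eventually.of_forall fun x => inv_nonneg.mpr (Real.sqrt_nonneg x)
  have hH := integral_mul_le_Lp_mul_Lq_of_nonneg hpq hfnn hgnn hf2 hg2
  have e1 : ∫ x in Ioc r R, f x * g x = ∫ x in Ioc r R, |deriv W x| := by
    refine setIntegral_congr_fun measurableSet_Ioc fun x hx => ?_
    have hx0 : 0 < x := lt_trans hr0 hx.1
    rw [hf, hg]
    simp only []
    rw [mul_assoc, mul_inv_cancel₀ (ne_of_gt (Real.sqrt_pos.mpr hx0)), mul_one]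
  have e2 : ∫ x in Ioc r R, f x ^ (2:ℝ) = ∫ x in Ioc r R, (deriv W x) ^ 2 * x := by
    refine setIntegral_congr_fun measurableSet_Ioc fun x hx => ?_
    have hx0 : (0:ℝ) ≤ x := le_of_lt (lt_trans hr0 hx.1)
    rw [hf]
    simp only []
    rw [Real.rpow_two, mul_pow, sq_abs, Real.sq_sqrt hx0]
  have e3 : ∫ x in Ioc r R, g x ^ (2:ℝ) = ∫ x in Ioc r R, x⁻¹ := by
    refine setIntegral_congr_fun measurableSet_Ioc fun x hx => ?_
    have hx0 : (0:ℝ) ≤ x := le_of_lt (lt_trans hr0 hx.1)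
    rw [hg]
    simp only []
    rw [Real.rpow_two, inv_pow, Real.sq_sqrt hx0]
  have e4 : ∫ x in Ioc r R, x⁻¹ = Real.log (R/r) := by
    rw [← intervalIntegral.integral_of_le hrR]
    exact integral_inv_of_pos hr0 hR
  have hint1 : IntegrableOn (fun x => (deriv W x) ^ 2 * x) (Icc 0 R) :=
    (((hW'c.pow 2).mul continuous_id).continuousOn).integrableOn_compact isCompact_Icc
  have e5 : ∫ x in Ioc r R, (deriv W x) ^ 2 * x ≤ A := by
    rw [integral_Ioc_eq_integral_Ioo, hA]
    refine setIntegral_mono_set (hint1.mono_set Ioo_subset_Icc_self) ?_ ?_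
    · filter_upwards [ae_restrict_mem measurableSet_Ioo] with x hx
      exact mul_nonneg (sq_nonneg _) (le_of_lt hx.1)
    · exact HasSubset.Subset.eventuallyLE (Ioo_subset_Ioo_left hr0.le)
  have hInn : 0 ≤ ∫ x in Ioc r R, (deriv W x) ^ 2 * x :=
    setIntegral_nonneg measurableSet_Ioc fun x hx =>
      mul_nonneg (sq_nonneg _) (le_of_lt (lt_trans hr0 hx.1))
  have hlognn : 0 ≤ Real.log (R/r) :=
    Real.log_nonneg ((one_le_div hr0).mpr hrR)
  calc |W r| ≤ ∫ x in Ioc r R, |deriv W x| := h1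
    _ = ∫ x in Ioc r R, f x * g x := e1.symm
    _ ≤ (∫ x in Ioc r R, f x ^ (2:ℝ)) ^ (1/(2:ℝ))
        * (∫ x in Ioc r R, g x ^ (2:ℝ)) ^ (1/(2:ℝ)) := hH
    _ = (∫ x in Ioc r R, (deriv W x) ^ 2 * x) ^ (1/2:ℝ) * (Real.log (R/r)) ^ (1/2:ℝ) := by
        rw [e2, e3, e4]
    _ ≤ A ^ (1/2:ℝ) * (Real.log (R/r)) ^ (1/2:ℝ) := by
        exact mul_le_mul_of_nonneg_right (Real.rpow_le_rpow hInn e5 (by norm_num))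
          (Real.rpow_nonneg hlognn _)

lemma abs_le_mul_self_of_deriv {R L : ℝ} {W : ℝ → ℝ}
    (hWd : Differentiable ℝ W) (hW'c : Continuous (deriv W)) (hW0 : W 0 = 0)
    (hL : ∀ x ∈ Icc (0:ℝ) R, ‖deriv W x‖ ≤ L) {x : ℝ} (hx : x ∈ Icc (0:ℝ) R) :
    |W x| ≤ L * x := by
  have hFTC : ∫ y in (0:ℝ)..x, deriv W y = W x := by
    rw [intervalIntegral.integral_deriv_eq_sub (fun y _ => hWd y)
      (hW'c.intervalIntegrable 0 x), hW0, sub_zero]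
  have hb : ∀ y ∈ Set.uIoc (0:ℝ) x, ‖deriv W y‖ ≤ L := by
    intro y hy
    rw [uIoc_of_le hx.1] at hy
    exact hL y ⟨hy.1.le, le_trans hy.2 hx.2⟩
  have := intervalIntegral.norm_integral_le_of_norm_le_const hb
  rw [hFTC, Real.norm_eq_abs, sub_zero, abs_of_nonneg hx.1] at this
  exact this

lemma integrableOn_gradSq {R : ℝ} (hR : 0 < R) {W : ℝ → ℝ}
    (hWc : ContDiff ℝ 2 W) (hW0 : W 0 = 0) :
    IntegrableOn (fun x => ((deriv W x) ^ 2 + (W x / x) ^ 2) * x) (Ioo 0 R) volume := by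
  have hWd : Differentiable ℝ W := hWc.differentiable (by norm_num)
  have hW'c : Continuous (deriv W) := hWc.continuous_deriv (by norm_num)
  obtain ⟨L, hL⟩ := isCompact_Icc.exists_bound_of_continuousOn
    (s := Icc (0:ℝ) R) hW'c.continuousOn
  have hLnn : 0 ≤ L := le_trans (norm_nonneg (deriv W 0)) (hL 0 ⟨le_refl 0, hR.le⟩)
  refine Measure.integrableOn_of_bounded (M := (L ^ 2 + L ^ 2) * R)
    (ne_of_lt measure_Ioo_lt_top) ?_ ?_
  · exact (((hW'c.measurable.pow_const 2).add
      ((hWc.continuous.measurable.div measurable_id).pow_const 2)).mul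
      measurable_id).aestronglyMeasurable
  · filter_upwards [ae_restrict_mem measurableSet_Ioo] with x hx
    have hx0 : 0 < x := hx.1
    have h1 : (deriv W x) ^ 2 ≤ L ^ 2 := by
      have := hL x ⟨hx0.le, hx.2.le⟩
      rw [Real.norm_eq_abs] at this
      nlinarith [abs_nonneg (deriv W x), neg_abs_le (deriv W x), le_abs_self (deriv W x)]
    have h2 : (W x / x) ^ 2 ≤ L ^ 2 := by
      have hWx : |W x| ≤ L * x := abs_le_mul_self_of_deriv hWd hW'c hW0 hL ⟨hx0.le, hx.2.le⟩
      have h3 : |W x / x| ≤ L := by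
        rw [abs_div, abs_of_pos hx0, div_le_iff₀ hx0]
        exact le_trans hWx (by rfl)
      nlinarith [abs_nonneg (W x / x), neg_abs_le (W x / x), le_abs_self (W x / x)]
    rw [Real.norm_eq_abs, abs_of_nonneg (mul_nonneg
      (add_nonneg (sq_nonneg _) (sq_nonneg _)) hx0.le)]
    exact mul_le_mul (add_le_add h1 h2) hx.2.le hx0.le (by positivity)


/-- **`L^q` estimate of `∇F`.** If `‖ρ‖_{L^∞} ≤ C₀`, then for every `1 ≤ q < ∞` there is a
constant `C` depending only on `q`, `C₀` and `Ω` such that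
`‖∇F‖_{L^q(Ω)} ≤ C ‖∇u̇‖_{L²(Ω)}` at each time. -/
theorem gradF_Lq_estimate
    (R q C₀ : ℝ) (hR : 0 < R) (hq : 1 ≤ q) (hC₀ : 0 < C₀) :
    ∃ C > 0, ∀ (μ β γ T : ℝ) (ρ u : ℝ → ℝ → ℝ),
      RadialSolution μ β γ R T ρ u →
      (∀ r ∈ Icc (0:ℝ) R, ∀ t ∈ Icc (0:ℝ) T, ρ r t ≤ C₀) →
      ∀ t ∈ Icc (0:ℝ) T,
        (2 * Real.pi * ∫ r in Ioo (0:ℝ) R,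
            |deriv (fun s => flux μ β γ ρ u s t) r| ^ q * r) ^ (1 / q)
          ≤ C * (2 * Real.pi * ∫ r in Ioo (0:ℝ) R, gradSq (mder u) r t * r) ^ ((1:ℝ) / 2) := by
  have hq0 : (0:ℝ) < q := lt_of_lt_of_le one_pos hq
  have hπ : (0:ℝ) < 2 * Real.pi := by positivity
  set K : ℝ := 2 * Real.pi * C₀ ^ q * q ^ (q/2 : ℝ) * R ^ 2 with hK
  have hKpos : 0 < K := by
    have h1 : (0:ℝ) < C₀ ^ q := Real.rpow_pos_of_pos hC₀ q
    have h2 : (0:ℝ) < q ^ (q/2:ℝ) := Real.rpow_pos_of_pos hq0 _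
    positivity
  have hCpos : 0 < K ^ (1/q) * ((2 * Real.pi) ^ (1/2:ℝ))⁻¹ := by
    have h1 : (0:ℝ) < K ^ (1/q) := Real.rpow_pos_of_pos hKpos _
    have h2 : (0:ℝ) < (2 * Real.pi) ^ (1/2:ℝ) := Real.rpow_pos_of_pos hπ _
    positivity
  refine ⟨K ^ (1/q) * ((2 * Real.pi) ^ (1/2:ℝ))⁻¹, hCpos, ?_⟩
  intro μ β γ T ρ u sol hbound t ht
  set W : ℝ → ℝ := fun s => mder u s t with hWdef
  have hWc : ContDiff ℝ 2 W := mder_contDiff (sol.smooth_u 3) t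
  have hWR : W R = 0 := mder_eq_zero_of_bc sol.hT (sol.smooth_u 1) R sol.bcR ht
  have hW0 : W 0 = 0 := mder_eq_zero_of_bc sol.hT (sol.smooth_u 1) 0 sol.bc0 ht
  set A := ∫ x in Ioo (0:ℝ) R, (deriv W x) ^ 2 * x with hA
  have hAnn : 0 ≤ A := by
    rw [hA]
    exact setIntegral_nonneg measurableSet_Ioo fun x hx =>
      mul_nonneg (sq_nonneg _) hx.1.le
  set I₀ := ∫ r in Ioo (0:ℝ) R, gradSq (mder u) r t * r with hI₀
  have hgint : IntegrableOn (fun x => ((deriv W x) ^ 2 + (W x / x) ^ 2) * x)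
      (Ioo 0 R) volume := integrableOn_gradSq hR hWc hW0
  have hAI : A ≤ I₀ := by
    rw [hA, hI₀]
    refine integral_mono_of_nonneg ?_ hgint ?_
    · filter_upwards [ae_restrict_mem measurableSet_Ioo] with x hx
      exact mul_nonneg (sq_nonneg _) hx.1.le
    · filter_upwards [ae_restrict_mem measurableSet_Ioo] with x hx
      have : gradSq (mder u) x t * x = ((deriv W x) ^ 2 + (W x / x) ^ 2) * x := rfl
      rw [this]
      nlinarith [sq_nonneg (W x / x), hx.1.le, sq_nonneg (deriv W x)]
  have hI₀nn : 0 ≤ I₀ := le_trans hAnn hAI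
  -- pointwise estimate
  set M : ℝ := C₀ ^ q * A ^ (q/2 : ℝ) * (q ^ (q/2 : ℝ) * R) with hM
  have hpt : ∀ r ∈ Ioo (0:ℝ) R,
      |deriv (fun s => flux μ β γ ρ u s t) r| ^ q * r ≤ M := by
    intro r hrm
    have hrin : r ∈ Icc (0:ℝ) R := Ioo_subset_Icc_self hrm
    have hρnn : 0 ≤ ρ r t := (sol.ρ_pos r hrin t ht).le
    have hlognn : 0 ≤ Real.log (R/r) :=
      Real.log_nonneg ((one_le_div hrm.1).mpr hrm.2.le)
    have hWb : |W r| ≤ A ^ (1/2:ℝ) * Real.log (R/r) ^ (1/2:ℝ) := by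
      rw [hA]
      exact pointwise_sqrt_log_bound hR hWc hWR hrm
    have h0 : |deriv (fun s => flux μ β γ ρ u s t) r|
        ≤ C₀ * (A ^ (1/2:ℝ) * Real.log (R/r) ^ (1/2:ℝ)) := by
      rw [flux_deriv_eq sol hrm ht, abs_mul, abs_of_nonneg hρnn]
      exact mul_le_mul (hbound r hrin t ht) hWb (abs_nonneg _) hC₀.le
    have h1 : |deriv (fun s => flux μ β γ ρ u s t) r| ^ q
        ≤ (C₀ * (A ^ (1/2:ℝ) * Real.log (R/r) ^ (1/2:ℝ))) ^ q :=
      Real.rpow_le_rpow (abs_nonneg _) h0 hq0.le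
    have hexp : (C₀ * (A ^ (1/2:ℝ) * Real.log (R/r) ^ (1/2:ℝ))) ^ q
        = C₀ ^ q * A ^ (q/2:ℝ) * Real.log (R/r) ^ (q/2:ℝ) := by
      rw [Real.mul_rpow hC₀.le (mul_nonneg (Real.rpow_nonneg hAnn _)
        (Real.rpow_nonneg hlognn _)),
        Real.mul_rpow (Real.rpow_nonneg hAnn _) (Real.rpow_nonneg hlognn _),
        ← Real.rpow_mul hAnn, ← Real.rpow_mul hlognn]
      have e : (1/2:ℝ) * q = q/2 := by ring
      rw [e, mul_assoc]
    have hxpos : 0 < R / r := div_pos hR hrm.1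
    have hlogb : Real.log (R/r) ^ (q/2:ℝ) ≤ q ^ (q/2:ℝ) * (R/r) ^ (1/2:ℝ) := by
      have hl1 : Real.log (R/r) ≤ q * (R/r) ^ (1/q:ℝ) := by
        have h2 : Real.log ((R/r) ^ (1/q:ℝ)) ≤ (R/r) ^ (1/q:ℝ) - 1 :=
          Real.log_le_sub_one_of_pos (Real.rpow_pos_of_pos hxpos _)
        have h3 : Real.log (R/r) = q * Real.log ((R/r) ^ (1/q:ℝ)) := by
          rw [Real.log_rpow hxpos]
          field_simp
        rw [h3]
        nlinarith [Real.rpow_pos_of_pos hxpos (1/q:ℝ)]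
      calc Real.log (R/r) ^ (q/2:ℝ) ≤ (q * (R/r) ^ (1/q:ℝ)) ^ (q/2:ℝ) :=
            Real.rpow_le_rpow hlognn hl1 (by positivity)
        _ = q ^ (q/2:ℝ) * (R/r) ^ (1/2:ℝ) := by
            rw [Real.mul_rpow hq0.le (Real.rpow_nonneg hxpos.le _),
              ← Real.rpow_mul hxpos.le]
            congr 1
            field_simp
    have hRr : (R/r) ^ (1/2:ℝ) * r ≤ R := by
      rw [← Real.sqrt_eq_rpow, Real.sqrt_div hR.le, div_mul_eq_mul_div, mul_div_assoc,
        Real.div_sqrt]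
      calc Real.sqrt R * Real.sqrt r ≤ Real.sqrt R * Real.sqrt R :=
            mul_le_mul_of_nonneg_left (Real.sqrt_le_sqrt hrm.2.le) (Real.sqrt_nonneg R)
        _ = R := Real.mul_self_sqrt hR.le
    have hC0A : 0 ≤ C₀ ^ q * A ^ (q/2:ℝ) :=
      mul_nonneg (Real.rpow_nonneg hC₀.le _) (Real.rpow_nonneg hAnn _)
    calc |deriv (fun s => flux μ β γ ρ u s t) r| ^ q * r
        ≤ (C₀ ^ q * A ^ (q/2:ℝ) * Real.log (R/r) ^ (q/2:ℝ)) * r := by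
          refine mul_le_mul_of_nonneg_right ?_ hrm.1.le
          rw [← hexp]
          exact h1
      _ ≤ (C₀ ^ q * A ^ (q/2:ℝ) * (q ^ (q/2:ℝ) * (R/r) ^ (1/2:ℝ))) * r := by
          exact mul_le_mul_of_nonneg_right
            (mul_le_mul_of_nonneg_left hlogb hC0A) hrm.1.le
      _ = C₀ ^ q * A ^ (q/2:ℝ) * q ^ (q/2:ℝ) * ((R/r) ^ (1/2:ℝ) * r) := by ring
      _ ≤ C₀ ^ q * A ^ (q/2:ℝ) * q ^ (q/2:ℝ) * R := by
          refine mul_le_mul_of_nonneg_left hRr ?_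
          exact mul_nonneg hC0A (Real.rpow_nonneg hq0.le _)
      _ = M := by rw [hM]; ring
  -- integrate the pointwise bound
  have hMnn : 0 ≤ M := by
    rw [hM]
    have h2 : (0:ℝ) ≤ q ^ (q/2:ℝ) := Real.rpow_nonneg hq0.le _
    have h3 : 0 ≤ C₀ ^ q * A ^ (q/2:ℝ) :=
      mul_nonneg (Real.rpow_nonneg hC₀.le _) (Real.rpow_nonneg hAnn _)
    exact mul_nonneg h3 (mul_nonneg h2 hR.le)
  have hJ : (∫ r in Ioo (0:ℝ) R, |deriv (fun s => flux μ β γ ρ u s t) r| ^ q * r)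
      ≤ M * R := by
    have hle : (∫ r in Ioo (0:ℝ) R, |deriv (fun s => flux μ β γ ρ u s t) r| ^ q * r)
        ≤ ∫ _r in Ioo (0:ℝ) R, M := by
      refine integral_mono_of_nonneg ?_ (integrableOn_const measure_Ioo_lt_top.ne) ?_
      · filter_upwards [ae_restrict_mem measurableSet_Ioo] with x hx
        exact mul_nonneg (Real.rpow_nonneg (abs_nonneg _) _) hx.1.le
      · filter_upwards [ae_restrict_mem measurableSet_Ioo] with x hx
        exact hpt x hx
    refine le_trans hle ?_
    rw [setIntegral_const, smul_eq_mul, Real.volume_real_Ioo_of_le hR.le, sub_zero,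
      mul_comm]
  have hJnn : 0 ≤ 2 * Real.pi * ∫ r in Ioo (0:ℝ) R,
      |deriv (fun s => flux μ β γ ρ u s t) r| ^ q * r :=
    mul_nonneg hπ.le (setIntegral_nonneg measurableSet_Ioo fun x hx =>
      mul_nonneg (Real.rpow_nonneg (abs_nonneg _) _) hx.1.le)
  have hfinal1 : 2 * Real.pi * (∫ r in Ioo (0:ℝ) R,
      |deriv (fun s => flux μ β γ ρ u s t) r| ^ q * r) ≤ K * A ^ (q/2:ℝ) := by
    have heq : 2 * Real.pi * (M * R) = K * A ^ (q/2:ℝ) := by rw [hM, hK]; ring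
    calc 2 * Real.pi * (∫ r in Ioo (0:ℝ) R,
          |deriv (fun s => flux μ β γ ρ u s t) r| ^ q * r)
        ≤ 2 * Real.pi * (M * R) := mul_le_mul_of_nonneg_left hJ hπ.le
      _ = K * A ^ (q/2:ℝ) := heq
  have hqne : q ≠ 0 := hq0.ne'
  have hπr : (0:ℝ) < (2 * Real.pi) ^ (1/2:ℝ) := Real.rpow_pos_of_pos hπ _
  calc (2 * Real.pi * ∫ r in Ioo (0:ℝ) R,
        |deriv (fun s => flux μ β γ ρ u s t) r| ^ q * r) ^ (1/q)
      ≤ (K * A ^ (q/2:ℝ)) ^ (1/q) :=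
        Real.rpow_le_rpow hJnn hfinal1 (by positivity)
    _ = K ^ (1/q) * (A ^ (q/2:ℝ)) ^ (1/q) :=
        Real.mul_rpow hKpos.le (Real.rpow_nonneg hAnn _)
    _ = K ^ (1/q) * A ^ (1/2:ℝ) := by
        have hE : (q/2:ℝ) * (1/q) = 1/2 := by
          field_simp
        rw [← Real.rpow_mul hAnn, hE]
    _ ≤ K ^ (1/q) * I₀ ^ (1/2:ℝ) :=
        mul_le_mul_of_nonneg_left (Real.rpow_le_rpow hAnn hAI (by norm_num))
          (Real.rpow_nonneg hKpos.le _)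
    _ = K ^ (1/q) * ((2 * Real.pi) ^ (1/2:ℝ))⁻¹ * (2 * Real.pi * I₀) ^ ((1:ℝ)/2) := by
        rw [Real.mul_rpow hπ.le hI₀nn]
        field_simp
end
end
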